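/- arXiv:1911.10845 — 7 statements merged into one kernel-verified Lean document; each statement's English description precedes it below -/
import Mathlib

section
/- Let P, Q, U : R → R^N be differentiable and D be a real symmetric N×N matrix. If P' = (1/2) D Q + U·Q and Q' = -(1/2) D P - U·P (where · denotes entrywise multiplication of vectors), then ‖P(t)‖² + ‖Q(t)‖² is constant in t. -/
/-!
The right-hand side is `(P, Q)' = (A Q, -A P)` with `A = D/2 + diag U` symmetric, i.e. a
skew-adjoint vector field: `d/dt (‖P‖² + ‖Q‖²) = 2⟪P, A Q⟫ - 2⟪Q, A P⟫ = 0`.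
-/

open Matrix

theorem norm_sq_add_norm_sq_eq_of_hasDerivAt_isSymmetric {E : Type*} [NormedAddCommGroup E]
    [InnerProductSpace ℝ E] (A : ℝ → E →ₗ[ℝ] E) (hA : ∀ t, (A t).IsSymmetric) (P Q : ℝ → E)
    (hP : ∀ t, HasDerivAt P (A t (Q t)) t) (hQ : ∀ t, HasDerivAt Q (-A t (P t)) t) (t s : ℝ) :
    ‖P t‖ ^ 2 + ‖Q t‖ ^ 2 = ‖P s‖ ^ 2 + ‖Q s‖ ^ 2 := by
  have hderiv : ∀ t, HasDerivAt (fun t => ‖P t‖ ^ 2 + ‖Q t‖ ^ 2) 0 t := by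
    intro t
    refine ((hP t).norm_sq.add (hQ t).norm_sq).congr_deriv ?_
    rw [inner_neg_right, real_inner_comm, hA t]
    ring
  exact is_const_of_deriv_eq_zero (fun t => (hderiv t).differentiableAt)
    (fun t => (hderiv t).deriv) t s

theorem Matrix.isHermitian_smul_add_diagonal {n : Type*} [Fintype n] [DecidableEq n]
    {D : Matrix n n ℝ} (hD : Dᵀ = D) (c : ℝ) (u : n → ℝ) :
    (c • D + diagonal u).IsHermitian :=
  ((isHermitian_iff_isSymm.mpr hD).smul (IsSelfAdjoint.all c)).add (isHermitian_diagonal u)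

/-- If `P' = (1/2) D Q + U·Q` and `Q' = -(1/2) D P - U·P` with `D` real symmetric and
`·` the entrywise product, then `‖P(t)‖² + ‖Q(t)‖²` is constant in `t`. -/
theorem mass_conserved_semidiscrete {N : ℕ}
    (D : Matrix (Fin N) (Fin N) ℝ) (hD : D.transpose = D)
    (P Q U : ℝ → EuclideanSpace ℝ (Fin N))
    (hP : ∀ t, HasDerivAt P
      (WithLp.toLp 2 ((1/2 : ℝ) • D.mulVec (Q t) + fun i => U t i * Q t i : Fin N → ℝ) :
        EuclideanSpace ℝ (Fin N)) t)
    (hQ : ∀ t, HasDerivAt Q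
      (WithLp.toLp 2 (-((1/2 : ℝ) • D.mulVec (P t)) - fun i => U t i * P t i : Fin N → ℝ) :
        EuclideanSpace ℝ (Fin N)) t) :
    ∀ t s : ℝ, ‖P t‖ ^ 2 + ‖Q t‖ ^ 2 = ‖P s‖ ^ 2 + ‖Q s‖ ^ 2 := by
  let A : ℝ → Matrix (Fin N) (Fin N) ℝ := fun t => (1/2 : ℝ) • D + diagonal (U t)
  have hA : ∀ t x, toEuclideanLin (A t) x =
      WithLp.toLp 2 ((1/2 : ℝ) • D.mulVec x + fun i => U t i * x i) := by
    intro t x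
    ext i
    simp [A, toLpLin_apply, mulVec_diagonal]
  refine norm_sq_add_norm_sq_eq_of_hasDerivAt_isSymmetric (fun t => toEuclideanLin (A t))
    (fun t => isSymmetric_toEuclideanLin_iff.mpr (isHermitian_smul_add_diagonal hD _ _)) P Q
    (fun t => by simpa only [hA] using hP t) (fun t => ?_)
  simpa only [hA, ← WithLp.toLp_neg, sub_eq_add_neg, neg_add] using hQ t
end

section
/- Let D^α and D^β be real symmetric N×N matrices and let U, V, P, Q : R → R^N be differentiable curves satisfying U' = 2V, V' = (1/2)(D^β U - U + P·P + Q·Q), P' = (1/2) D^α Q + U·Q, Q' = -(1/2) D^α P - U·P, where · denotes entrywise multiplication. Then the discrete energy H = (1/4)( -P^T D^α P - Q^T D^α Q - U^T D^β U + U^T U + 4 V^T V - 2 U^T(P·P + Q·Q) ) is constant in time. -/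
/-!
The system is Hamiltonian for `H`: with `∂H/∂U = -(1/2)(DᵝU - U + P·P + Q·Q)`, `∂H/∂V = 2V`,
`∂H/∂P = -(1/2)DᵅP - U·P` and `∂H/∂Q = -(1/2)DᵅQ - U·Q` (the symmetry of `Dᵅ` and `Dᵝ` makes
the quadratic forms differentiate to these), the equations read `U' = ∂H/∂V`, `V' = -∂H/∂U`,
`P' = -∂H/∂Q`, `Q' = ∂H/∂P`. Hence `dH/dt = ∇H ⬝ (U', V', P', Q')` cancels in pairs.
-/

open Matrix

theorem Matrix.IsSymm.dotProduct_mulVec_comm {ι R : Type*} [Fintype ι] [CommSemiring R]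
    {D : Matrix ι ι R} (hD : D.IsSymm) (x y : ι → R) :
    x ⬝ᵥ D *ᵥ y = y ⬝ᵥ D *ᵥ x := by
  rw [dotProduct_mulVec, ← mulVec_transpose, hD.eq, dotProduct_comm]

section Deriv

variable {𝕜 ι : Type*} [NontriviallyNormedField 𝕜] [Fintype ι]
  {f g : 𝕜 → ι → 𝕜} {f' g' : ι → 𝕜} {t : 𝕜}

theorem HasDerivAt.dotProduct (hf : HasDerivAt f f' t) (hg : HasDerivAt g g' t) :
    HasDerivAt (fun τ => f τ ⬝ᵥ g τ) (f' ⬝ᵥ g t + f t ⬝ᵥ g') t := by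
  have h := HasDerivAt.fun_sum (u := Finset.univ) fun i _ =>
    (hasDerivAt_pi.mp hf i).fun_mul (hasDerivAt_pi.mp hg i)
  rwa [Finset.sum_add_distrib] at h

theorem HasDerivAt.mulVec {κ : Type*} [Fintype κ] (D : Matrix κ ι 𝕜)
    (hf : HasDerivAt f f' t) : HasDerivAt (fun τ => D *ᵥ f τ) (D *ᵥ f') t :=
  hasDerivAt_pi.mpr fun k =>
    HasDerivAt.fun_sum fun i _ => (hasDerivAt_pi.mp hf i).const_mul (D k i)

theorem HasDerivAt.dotProduct_mulVec_self {D : Matrix ι ι 𝕜} (hD : D.IsSymm)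
    (hf : HasDerivAt f f' t) :
    HasDerivAt (fun τ => f τ ⬝ᵥ D *ᵥ f τ) (2 * (f' ⬝ᵥ D *ᵥ f t)) t := by
  convert hf.dotProduct (hf.mulVec D) using 1
  rw [hD.dotProduct_mulVec_comm (f t) f']
  ring

end Deriv

section Energy

variable {ι : Type*} [Fintype ι]

noncomputable def semidiscreteEnergy (Dα Dβ : Matrix ι ι ℝ) (u v p q : ι → ℝ) : ℝ :=
  1 / 4 * (-(p ⬝ᵥ Dα *ᵥ p) - q ⬝ᵥ Dα *ᵥ q - u ⬝ᵥ Dβ *ᵥ u + u ⬝ᵥ u + 4 * (v ⬝ᵥ v)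
    - 2 * (u ⬝ᵥ (p * p + q * q)))

theorem hasDerivAt_semidiscreteEnergy {Dα Dβ : Matrix ι ι ℝ} (hDα : Dα.IsSymm) (hDβ : Dβ.IsSymm)
    {U V P Q : ℝ → ι → ℝ} {U' V' P' Q' : ι → ℝ} {t : ℝ}
    (hU : HasDerivAt U U' t) (hV : HasDerivAt V V' t) (hP : HasDerivAt P P' t)
    (hQ : HasDerivAt Q Q' t) :
    HasDerivAt (fun τ => semidiscreteEnergy Dα Dβ (U τ) (V τ) (P τ) (Q τ))
      (-((1 / 2 : ℝ) • (Dβ *ᵥ U t - U t + P t * P t + Q t * Q t)) ⬝ᵥ U'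
        + ((2 : ℝ) • V t) ⬝ᵥ V'
        + (-((1 / 2 : ℝ) • (Dα *ᵥ P t)) - U t * P t) ⬝ᵥ P'
        + (-((1 / 2 : ℝ) • (Dα *ᵥ Q t)) - U t * Q t) ⬝ᵥ Q') t := by
  have hquad := ((hP.dotProduct_mulVec_self hDα).fun_neg.fun_sub
    (hQ.dotProduct_mulVec_self hDα)).fun_sub (hU.dotProduct_mulVec_self hDβ)
  have hcubic := hU.dotProduct ((hP.fun_mul hP).fun_add (hQ.fun_mul hQ))
  refine (((hquad.fun_add (hU.dotProduct hU)).fun_add ((hV.dotProduct hV).const_mul 4)).fun_sub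
    (hcubic.const_mul 2)).const_mul (1 / 4) |>.congr_deriv ?_
  simp only [dotProduct, Pi.add_apply, Pi.sub_apply, Pi.neg_apply, Pi.mul_apply, Pi.smul_apply,
    smul_eq_mul, Finset.mul_sum, ← Finset.sum_add_distrib, ← Finset.sum_sub_distrib,
    ← Finset.sum_neg_distrib]
  exact Finset.sum_congr rfl fun i _ => by ring

end Energy

/-- For the semi-discrete system `U' = 2V`, `V' = (1/2)(DᵝU - U + P·P + Q·Q)`,
`P' = (1/2)DᵅQ + U·Q`, `Q' = -(1/2)DᵅP - U·P` with `Dᵅ, Dᵝ` symmetric, the discrete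
energy `H = (1/4)(-PᵀDᵅP - QᵀDᵅQ - UᵀDᵝU + UᵀU + 4VᵀV - 2Uᵀ(P·P + Q·Q))` is constant. -/
theorem energy_conserved_semidiscrete {N : ℕ}
    (Dα Dβ : Matrix (Fin N) (Fin N) ℝ)
    (hDα : Dα.transpose = Dα) (hDβ : Dβ.transpose = Dβ)
    (U V P Q : ℝ → Fin N → ℝ)
    (hU : ∀ t, HasDerivAt U ((2 : ℝ) • V t) t)
    (hV : ∀ t, HasDerivAt V
      ((1/2 : ℝ) • (Dβ.mulVec (U t) - U t +
        (fun i => P t i * P t i) + fun i => Q t i * Q t i)) t)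
    (hP : ∀ t, HasDerivAt P
      ((1/2 : ℝ) • Dα.mulVec (Q t) + fun i => U t i * Q t i) t)
    (hQ : ∀ t, HasDerivAt Q
      (-((1/2 : ℝ) • Dα.mulVec (P t)) - fun i => U t i * P t i) t) :
    ∀ t s : ℝ,
      (1/4 : ℝ) * (-(dotProduct (P t) (Dα.mulVec (P t)))
        - dotProduct (Q t) (Dα.mulVec (Q t))
        - dotProduct (U t) (Dβ.mulVec (U t))
        + dotProduct (U t) (U t)
        + 4 * dotProduct (V t) (V t)
        - 2 * dotProduct (U t)
            ((fun i => P t i * P t i) + fun i => Q t i * Q t i)) =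
      (1/4 : ℝ) * (-(dotProduct (P s) (Dα.mulVec (P s)))
        - dotProduct (Q s) (Dα.mulVec (Q s))
        - dotProduct (U s) (Dβ.mulVec (U s))
        + dotProduct (U s) (U s)
        + 4 * dotProduct (V s) (V s)
        - 2 * dotProduct (U s)
            ((fun i => P s i * P s i) + fun i => Q s i * Q s i)) := by
  have hH (r : ℝ) :
      HasDerivAt (fun τ => semidiscreteEnergy Dα Dβ (U τ) (V τ) (P τ) (Q τ)) 0 r := by
    refine (hasDerivAt_semidiscreteEnergy hDα hDβ (hU r) (hV r) (hP r) (hQ r)).congr_deriv ?_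
    simp only [← Pi.mul_def]
    rw [← neg_neg ((1 / 2 : ℝ) • Dα *ᵥ Q r + U r * Q r), neg_add', dotProduct_neg,
      dotProduct_comm ((2 : ℝ) • V r), dotProduct_comm (-((1 / 2 : ℝ) • Dα *ᵥ Q r) - U r * Q r),
      neg_dotProduct]
    ring
  intro t s
  exact is_const_of_deriv_eq_zero (fun r => (hH r).differentiableAt) (fun r => (hH r).deriv) t s
end

section
/- Let D^α, D^β be real symmetric N×N matrices, τ > 0, and suppose U^{m+1}, U^m, V^{m+1}, V^m, P^{m+1}, P^m, Q^{m+1}, Q^m ∈ R^N satisfy the FPAVF scheme: (U^{m+1}-U^m)/τ = V^{m+1}+V^m, (V^{m+1}-V^m)/τ = (1/2)(D^β Ū - Ū) + (1/2)(P^m·P^m + Q^m·Q^m), (P^{m+1}-P^m)/τ = (1/2)D^α Q̄ + U^{m+1}·Q̄, (Q^{m+1}-Q^m)/τ = -(1/2)D^α P̄ - U^{m+1}·P̄, where X̄ = (X^{m+1}+X^m)/2. Then the discrete energy H^m = (1/4)( -(P^m)^T D^α P^m - (Q^m)^T D^α Q^m - (U^m)^T D^β U^m + (U^m)^T U^m +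 4(V^m)^T V^m - 2(U^m)^T(P^m·P^m + Q^m·Q^m) ) satisfies H^{m+1} = H^m. -/
/-!
The scheme is a discrete-gradient method. By the symmetry of `Dα` and `Dβ`,
`4 (Hᵐ⁺¹ - Hᵐ)` is exactly the sum of the increments paired with the averaged-vector-field
gradients of `4 H`, and the scheme moves `(U, V)` and `(Q, P)` along `τ / 4` times the
symplectic rotation of those gradients, so the pairing cancels in pairs.
-/

open Matrix

variable {n : Type*} [Fintype n]

theorem Matrix.IsSymm.dotProduct_mulVec_sub_dotProduct_mulVec {R : Type*} [CommRing R]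
    {M : Matrix n n R} (hM : M.IsSymm) (x y : n → R) :
    x ⬝ᵥ (M *ᵥ x) - y ⬝ᵥ (M *ᵥ y) = (x - y) ⬝ᵥ (M *ᵥ (x + y)) := by
  have hxy : x ⬝ᵥ (M *ᵥ y) = y ⬝ᵥ (M *ᵥ x) := by
    rw [dotProduct_mulVec, ← mulVec_transpose, hM.eq, dotProduct_comm]
  rw [mulVec_add, dotProduct_add, sub_dotProduct, sub_dotProduct, hxy]
  ring

theorem dotProduct_self_sub_dotProduct_self {R : Type*} [CommRing R] (x y : n → R) :
    x ⬝ᵥ x - y ⬝ᵥ y = (x - y) ⬝ᵥ (x + y) := by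
  rw [dotProduct_add, sub_dotProduct, sub_dotProduct, dotProduct_comm y x]
  ring

theorem dotProduct_mul_self_add_mul_self_sub {R : Type*} [CommRing R]
    (U0 U1 P0 P1 Q0 Q1 : n → R) :
    U1 ⬝ᵥ (P1 * P1 + Q1 * Q1) - U0 ⬝ᵥ (P0 * P0 + Q0 * Q0) =
      (U1 - U0) ⬝ᵥ (P0 * P0 + Q0 * Q0) + (P1 - P0) ⬝ᵥ (U1 * (P1 + P0)) +
        (Q1 - Q0) ⬝ᵥ (U1 * (Q1 + Q0)) := by
  simp only [dotProduct, ← Finset.sum_sub_distrib, ← Finset.sum_add_distrib]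
  refine Finset.sum_congr rfl fun i _ => ?_
  simp only [Pi.add_apply, Pi.sub_apply, Pi.mul_apply]
  ring

/-- The discrete energy `Hᵐ`. -/
noncomputable def fpavfEnergy (Dα Dβ : Matrix n n ℝ) (U V P Q : n → ℝ) : ℝ :=
  (1/4 : ℝ) * (-(P ⬝ᵥ (Dα *ᵥ P)) - Q ⬝ᵥ (Dα *ᵥ Q) - U ⬝ᵥ (Dβ *ᵥ U) + U ⬝ᵥ U
    + 4 * V ⬝ᵥ V - 2 * U ⬝ᵥ (P * P + Q * Q))

/-- Averaged-vector-field gradient of `4 H` with respect to `U`. -/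
def fpavfGradU (Dβ : Matrix n n ℝ) (U0 U1 P0 Q0 : n → ℝ) : n → ℝ :=
  U1 + U0 - Dβ *ᵥ (U1 + U0) - 2 • (P0 * P0 + Q0 * Q0)

/-- Averaged-vector-field gradient of `4 H` with respect to `P` (and, with `Q` in place of
`P`, with respect to `Q`). -/
def fpavfGradP (Dα : Matrix n n ℝ) (U1 P0 P1 : n → ℝ) : n → ℝ :=
  -(Dα *ᵥ (P1 + P0)) - 2 • (U1 * (P1 + P0))

theorem four_mul_fpavfEnergy_sub {Dα Dβ : Matrix n n ℝ} (hDα : Dα.IsSymm) (hDβ : Dβ.IsSymm)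
    (U0 U1 V0 V1 P0 P1 Q0 Q1 : n → ℝ) :
    4 * (fpavfEnergy Dα Dβ U1 V1 P1 Q1 - fpavfEnergy Dα Dβ U0 V0 P0 Q0) =
      (U1 - U0) ⬝ᵥ fpavfGradU Dβ U0 U1 P0 Q0 + (V1 - V0) ⬝ᵥ ((4 : ℝ) • (V1 + V0)) +
        (P1 - P0) ⬝ᵥ fpavfGradP Dα U1 P0 P1 + (Q1 - Q0) ⬝ᵥ fpavfGradP Dα U1 Q0 Q1 := by
  have hP := hDα.dotProduct_mulVec_sub_dotProduct_mulVec P1 P0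
  have hQ := hDα.dotProduct_mulVec_sub_dotProduct_mulVec Q1 Q0
  have hU := hDβ.dotProduct_mulVec_sub_dotProduct_mulVec U1 U0
  have hUU := dotProduct_self_sub_dotProduct_self U1 U0
  have hVV := dotProduct_self_sub_dotProduct_self V1 V0
  have hW := dotProduct_mul_self_add_mul_self_sub U0 U1 P0 P1 Q0 Q1
  simp only [fpavfEnergy, fpavfGradU, fpavfGradP, dotProduct_sub, dotProduct_neg,
    dotProduct_smul, smul_eq_mul]
  linear_combination -hP - hQ - hU + hUU + 4 * hVV - 2 * hW

theorem fpavfEnergy_eq_of_increments {Dα Dβ : Matrix n n ℝ} (hDα : Dα.IsSymm)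
    (hDβ : Dβ.IsSymm) (c : ℝ) {U0 U1 V0 V1 P0 P1 Q0 Q1 : n → ℝ}
    (hU : U1 - U0 = c • ((4 : ℝ) • (V1 + V0))) (hV : V1 - V0 = -c • fpavfGradU Dβ U0 U1 P0 Q0)
    (hP : P1 - P0 = -c • fpavfGradP Dα U1 Q0 Q1) (hQ : Q1 - Q0 = c • fpavfGradP Dα U1 P0 P1) :
    fpavfEnergy Dα Dβ U1 V1 P1 Q1 = fpavfEnergy Dα Dβ U0 V0 P0 Q0 := by
  have hsum := four_mul_fpavfEnergy_sub hDα hDβ U0 U1 V0 V1 P0 P1 Q0 Q1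
  rw [hU, hV, hP, hQ] at hsum
  simp only [smul_dotProduct, dotProduct_smul, smul_eq_mul,
    dotProduct_comm (fpavfGradU Dβ U0 U1 P0 Q0), dotProduct_comm (fpavfGradP Dα U1 Q0 Q1)] at hsum
  linarith

/-- Discrete energy conservation for the FPAVF scheme: under
`(Uᵐ⁺¹-Uᵐ)/τ = Vᵐ⁺¹+Vᵐ`, `(Vᵐ⁺¹-Vᵐ)/τ = (1/2)(DᵝŪ - Ū) + (1/2)(Pᵐ·Pᵐ + Qᵐ·Qᵐ)`,
`(Pᵐ⁺¹-Pᵐ)/τ = (1/2)DᵅQ̄ + Uᵐ⁺¹·Q̄`, `(Qᵐ⁺¹-Qᵐ)/τ = -(1/2)DᵅP̄ - Uᵐ⁺¹·P̄`,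
the discrete energy `Hᵐ` satisfies `Hᵐ⁺¹ = Hᵐ`. -/
theorem discrete_energy_conservation_FPAVF {N : ℕ}
    (Dα Dβ : Matrix (Fin N) (Fin N) ℝ)
    (hDα : Dα.transpose = Dα) (hDβ : Dβ.transpose = Dβ)
    (τ : ℝ) (hτ : 0 < τ)
    (U0 U1 V0 V1 P0 P1 Q0 Q1 : Fin N → ℝ)
    (hU : (1/τ) • (U1 - U0) = V1 + V0)
    (hV : (1/τ) • (V1 - V0) =
      (1/2 : ℝ) • (Dβ.mulVec ((1/2 : ℝ) • (U1 + U0)) - (1/2 : ℝ) • (U1 + U0)) +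
      (1/2 : ℝ) • ((fun i => P0 i * P0 i) + fun i => Q0 i * Q0 i))
    (hP : (1/τ) • (P1 - P0) =
      (1/2 : ℝ) • Dα.mulVec ((1/2 : ℝ) • (Q1 + Q0)) +
      fun i => U1 i * ((1/2 : ℝ) • (Q1 + Q0)) i)
    (hQ : (1/τ) • (Q1 - Q0) =
      -((1/2 : ℝ) • Dα.mulVec ((1/2 : ℝ) • (P1 + P0))) -
      fun i => U1 i * ((1/2 : ℝ) • (P1 + P0)) i) :
    (1/4 : ℝ) * (-(dotProduct P1 (Dα.mulVec P1))
      - dotProduct Q1 (Dα.mulVec Q1)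
      - dotProduct U1 (Dβ.mulVec U1)
      + dotProduct U1 U1
      + 4 * dotProduct V1 V1
      - 2 * dotProduct U1 ((fun i => P1 i * P1 i) + fun i => Q1 i * Q1 i)) =
    (1/4 : ℝ) * (-(dotProduct P0 (Dα.mulVec P0))
      - dotProduct Q0 (Dα.mulVec Q0)
      - dotProduct U0 (Dβ.mulVec U0)
      + dotProduct U0 U0
      + 4 * dotProduct V0 V0
      - 2 * dotProduct U0 ((fun i => P0 i * P0 i) + fun i => Q0 i * Q0 i)) := by
  rw [one_div, inv_smul_eq_iff₀ hτ.ne'] at hU hV hP hQ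
  refine fpavfEnergy_eq_of_increments hDα hDβ (τ / 4) ?_ ?_ ?_ ?_ <;>
    simp only [hU, hV, hP, hQ] <;> ext i <;>
    simp [fpavfGradU, fpavfGradP, mulVec_add, mulVec_smul] <;> ring
end

section
/- Let D^α, D^β be real symmetric N×N matrices, τ > 0, and suppose U^{m+1}, U^m, V^{m+1}, V^m, P^{m+1}, P^m, Q^{m+1}, Q^m ∈ R^N satisfy the FPAVF-P scheme: (U^{m+1}-U^m)/τ = (V^{m+1}+V^m)/2, (V^{m+1}-V^m)/τ = (1/2)(D^β Ū - Ū) + (1/4)(P^m·P^m + Q^m·Q^m + P^{m+1}·P^{m+1} + Q^{m+1}·Q^{m+1}), (P^{m+1}-P^m)/τ = (1/2)D^α Q̄ + Ū·Q̄, (Q^{m+1}-Q^m)/τ = -(1/2)D^α P̄ - Ū·P̄, where X̄ = (X^{m+1}+X^m)/2. Then ‖P^{m+1}‖² + ‖Q^{m+1}‖² = ‖P^m‖² + ‖Q^m‖². -/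
/-!
With `B = ½ Dα + diag Ū`, a symmetric operator, the `P`, `Q` equations say
`P¹ - P⁰ = (τ/2) B (Q¹ + Q⁰)` and `Q¹ - Q⁰ = -(τ/2) B (P¹ + P⁰)`: an implicit midpoint step of the
rotation `(P, Q) ↦ (BQ, -BP)`. Since `‖x‖² - ‖y‖² = ⟪x - y, x + y⟫`, the changes of `‖P‖²` and
`‖Q‖²` are `(τ/2)⟪B(Q¹ + Q⁰), P¹ + P⁰⟫` and `-(τ/2)⟪B(P¹ + P⁰), Q¹ + Q⁰⟫`, which cancel by the
symmetry of `B`.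
-/

open Matrix
open scoped InnerProductSpace

theorem LinearMap.IsSymmetric.norm_sq_add_norm_sq_eq_of_sub_eq
    {E : Type*} [NormedAddCommGroup E] [InnerProductSpace ℝ E] {B : E →ₗ[ℝ] E}
    (hB : B.IsSymmetric) {c : ℝ} {p₀ p₁ q₀ q₁ : E}
    (hp : p₁ - p₀ = c • B (q₁ + q₀)) (hq : q₁ - q₀ = -(c • B (p₁ + p₀))) :
    ‖p₁‖ ^ 2 + ‖q₁‖ ^ 2 = ‖p₀‖ ^ 2 + ‖q₀‖ ^ 2 := by
  have norm_sq_sub_norm_sq (x y : E) : ‖x‖ ^ 2 - ‖y‖ ^ 2 = ⟪x - y, x + y⟫_ℝ := by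
    simp only [inner_sub_left, inner_add_right, real_inner_self_eq_norm_sq, real_inner_comm x y]
    ring
  have hp' : ‖p₁‖ ^ 2 - ‖p₀‖ ^ 2 = c * ⟪B (q₁ + q₀), p₁ + p₀⟫_ℝ := by
    rw [norm_sq_sub_norm_sq, hp, real_inner_smul_left]
  have hq' : ‖q₁‖ ^ 2 - ‖q₀‖ ^ 2 = -(c * ⟪B (p₁ + p₀), q₁ + q₀⟫_ℝ) := by
    rw [norm_sq_sub_norm_sq, hq, inner_neg_left, real_inner_smul_left]
  have hsymm : ⟪B (p₁ + p₀), q₁ + q₀⟫_ℝ = ⟪B (q₁ + q₀), p₁ + p₀⟫_ℝ := by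
    rw [hB]
    exact real_inner_comm _ _
  rw [hsymm] at hq'
  linarith

theorem Matrix.toEuclideanLin_add_diagonal_apply {𝕜 n : Type*} [RCLike 𝕜] [Fintype n]
    [DecidableEq n] (D : Matrix n n 𝕜) (u : n → 𝕜) (x : EuclideanSpace 𝕜 n) :
    (D + diagonal u).toEuclideanLin x = WithLp.toLp 2 (D *ᵥ x + fun i => u i * x i) := by
  ext i
  simp [toLpLin_apply, mulVec_diagonal]

theorem discrete_mass_conservation_FPAVF_P_general {N : ℕ}
    (Dα : Matrix (Fin N) (Fin N) ℝ)
    (hDα : Dα.transpose = Dα)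
    (τ : ℝ) (hτ : 0 < τ)
    (U0 U1 : Fin N → ℝ)
    (P0 P1 Q0 Q1 : EuclideanSpace ℝ (Fin N))
    (hP : (1/τ) • (P1 - P0) =
      (WithLp.toLp 2 ((1/2 : ℝ) • Dα.mulVec ((1/2 : ℝ) • (Q1 + Q0)) +
        fun i => ((1/2 : ℝ) • (U1 + U0)) i * ((1/2 : ℝ) • (Q1 + Q0)) i : Fin N → ℝ) :
          EuclideanSpace ℝ (Fin N)))
    (hQ : (1/τ) • (Q1 - Q0) =
      (WithLp.toLp 2 (-((1/2 : ℝ) • Dα.mulVec ((1/2 : ℝ) • (P1 + P0))) -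
        fun i => ((1/2 : ℝ) • (U1 + U0)) i * ((1/2 : ℝ) • (P1 + P0)) i : Fin N → ℝ) :
          EuclideanSpace ℝ (Fin N))) :
    ‖P1‖ ^ 2 + ‖Q1‖ ^ 2 = ‖P0‖ ^ 2 + ‖Q0‖ ^ 2 := by
  set B := ((1/2 : ℝ) • Dα + diagonal ((1/2 : ℝ) • (U1 + U0))).toEuclideanLin
  have hB : B.IsSymmetric := isSymmetric_toEuclideanLin_iff.mpr <|
    ((isHermitian_iff_isSymm.mpr hDα).smul (IsSelfAdjoint.all _)).add (isHermitian_diagonal _)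
  have hP' : (1/τ) • (P1 - P0) = B ((1/2 : ℝ) • (Q1 + Q0)) := by
    rw [hP, toEuclideanLin_add_diagonal_apply, smul_mulVec]
    -- `ofLp (c • (x + y))` and `c • (ofLp x + ofLp y)` agree definitionally
    rfl
  have hQ' : (1/τ) • (Q1 - Q0) = -B ((1/2 : ℝ) • (P1 + P0)) := by
    rw [hQ, ← neg_add', WithLp.toLp_neg, toEuclideanLin_add_diagonal_apply, smul_mulVec]
    rfl
  rw [one_div, inv_smul_eq_iff₀ hτ.ne', map_smul, smul_smul] at hP'
  rw [one_div, inv_smul_eq_iff₀ hτ.ne', map_smul, smul_neg, smul_smul] at hQ'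
  exact hB.norm_sq_add_norm_sq_eq_of_sub_eq hP' hQ'

/-- Discrete mass conservation for the FPAVF-P scheme:
`(Uᵐ⁺¹-Uᵐ)/τ = (Vᵐ⁺¹+Vᵐ)/2`,
`(Vᵐ⁺¹-Vᵐ)/τ = (1/2)(DᵝŪ - Ū) + (1/4)(Pᵐ·Pᵐ + Qᵐ·Qᵐ + Pᵐ⁺¹·Pᵐ⁺¹ + Qᵐ⁺¹·Qᵐ⁺¹)`,
`(Pᵐ⁺¹-Pᵐ)/τ = (1/2)DᵅQ̄ + Ū·Q̄`, `(Qᵐ⁺¹-Qᵐ)/τ = -(1/2)DᵅP̄ - Ū·P̄`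
imply `‖Pᵐ⁺¹‖² + ‖Qᵐ⁺¹‖² = ‖Pᵐ‖² + ‖Qᵐ‖²`. -/
theorem discrete_mass_conservation_FPAVF_P {N : ℕ}
    (Dα Dβ : Matrix (Fin N) (Fin N) ℝ)
    (hDα : Dα.transpose = Dα) (hDβ : Dβ.transpose = Dβ)
    (τ : ℝ) (hτ : 0 < τ)
    (U0 U1 V0 V1 : Fin N → ℝ)
    (P0 P1 Q0 Q1 : EuclideanSpace ℝ (Fin N))
    (hU : (1/τ) • (U1 - U0) = (1/2 : ℝ) • (V1 + V0))
    (hV : (1/τ) • (V1 - V0) =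
      (1/2 : ℝ) • (Dβ.mulVec ((1/2 : ℝ) • (U1 + U0)) - (1/2 : ℝ) • (U1 + U0)) +
      (1/4 : ℝ) • ((fun i => P0 i * P0 i) + (fun i => Q0 i * Q0 i) +
        (fun i => P1 i * P1 i) + fun i => Q1 i * Q1 i))
    (hP : (1/τ) • (P1 - P0) =
      (WithLp.toLp 2 ((1/2 : ℝ) • Dα.mulVec ((1/2 : ℝ) • (Q1 + Q0)) +
        fun i => ((1/2 : ℝ) • (U1 + U0)) i * ((1/2 : ℝ) • (Q1 + Q0)) i : Fin N → ℝ) :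
          EuclideanSpace ℝ (Fin N)))
    (hQ : (1/τ) • (Q1 - Q0) =
      (WithLp.toLp 2 (-((1/2 : ℝ) • Dα.mulVec ((1/2 : ℝ) • (P1 + P0))) -
        fun i => ((1/2 : ℝ) • (U1 + U0)) i * ((1/2 : ℝ) • (P1 + P0)) i : Fin N → ℝ) :
          EuclideanSpace ℝ (Fin N))) :
    ‖P1‖ ^ 2 + ‖Q1‖ ^ 2 = ‖P0‖ ^ 2 + ‖Q0‖ ^ 2 :=
  discrete_mass_conservation_FPAVF_P_general Dα hDα τ hτ U0 U1 P0 P1 Q0 Q1 hP hQ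
end

section
/- Suppose P^{m+1}, P^m, Q^{m+1}, Q^m ∈ R^N, U ∈ R^N, D is a real symmetric N×N matrix, τ > 0, and (P^{m+1} - P^m)/τ = (1/2) D Q̄ + U·Q̄, (Q^{m+1} - Q^m)/τ = -(1/2) D P̄ - U·P̄ with P̄ = (P^{m+1}+P^m)/2, Q̄ = (Q^{m+1}+Q^m)/2. Then (P^{m+1})^T D P^{m+1} + (Q^{m+1})^T D Q^{m+1} + 2(P^{m+1})^T (U·P^{m+1}) + 2(Q^{m+1})^T (U·Q^{m+1}) = (P^m)^T D P^m + (Q^m)^T D Q^m + 2(P^m)^T(U·P^m) + 2(Q^m)^T(U·Q^m). -/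
/-!
Let `A = D + 2 diag U`, a symmetric matrix, and `q x = xᵀ A x`. The update reads
`P¹ - P⁰ = (τ/4) A (Q¹ + Q⁰)` and `Q¹ - Q⁰ = -(τ/4) A (P¹ + P⁰)`. For symmetric `A`,
`q x - q y = (x - y)ᵀ A (x + y)`, so the increments of `q` along `P` and `Q` are
`± (τ/4) (A (Q¹ + Q⁰))ᵀ A (P¹ + P⁰)` and cancel.
-/

open Matrix

namespace Matrix

variable {n R : Type*} [Fintype n] [CommRing R] {A : Matrix n n R}

theorem IsSymm.dotProduct_mulVec_comm_s7 (hA : A.IsSymm) (x y : n → R) :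
    x ⬝ᵥ A *ᵥ y = y ⬝ᵥ A *ᵥ x := by
  rw [dotProduct_mulVec, ← mulVec_transpose, hA.eq, dotProduct_comm]

theorem IsSymm.dotProduct_mulVec_self_sub (hA : A.IsSymm) (x y : n → R) :
    x ⬝ᵥ A *ᵥ x - y ⬝ᵥ A *ᵥ y = (x - y) ⬝ᵥ A *ᵥ (x + y) := by
  rw [mulVec_add, sub_dotProduct, dotProduct_add, dotProduct_add,
    hA.dotProduct_mulVec_comm_s7 y x]
  ring

theorem IsSymm.dotProduct_mulVec_self_add_eq_of_midpoint (hA : A.IsSymm) (c : R)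
    {p₀ p₁ q₀ q₁ : n → R} (hp : p₁ - p₀ = c • A *ᵥ (q₁ + q₀))
    (hq : q₁ - q₀ = -(c • A *ᵥ (p₁ + p₀))) :
    p₁ ⬝ᵥ A *ᵥ p₁ + q₁ ⬝ᵥ A *ᵥ q₁ = p₀ ⬝ᵥ A *ᵥ p₀ + q₀ ⬝ᵥ A *ᵥ q₀ := by
  have hP := hA.dotProduct_mulVec_self_sub p₁ p₀
  have hQ := hA.dotProduct_mulVec_self_sub q₁ q₀
  rw [hp, smul_dotProduct, smul_eq_mul] at hP
  rw [hq, neg_dotProduct, smul_dotProduct, smul_eq_mul,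
    dotProduct_comm (A *ᵥ (p₁ + p₀))] at hQ
  linear_combination hP + hQ

variable [DecidableEq n]

theorem add_two_smul_diagonal_mulVec (D : Matrix n n R) (U v : n → R) :
    (D + (2 : R) • diagonal U) *ᵥ v = D *ᵥ v + (2 : R) • fun i => U i * v i := by
  ext i
  simp only [add_mulVec, smul_mulVec, Pi.add_apply, Pi.smul_apply, mulVec_diagonal]

theorem dotProduct_add_two_smul_diagonal_mulVec (D : Matrix n n R) (U v : n → R) :
    v ⬝ᵥ (D + (2 : R) • diagonal U) *ᵥ v = v ⬝ᵥ D *ᵥ v + 2 * v ⬝ᵥ fun i => U i * v i := by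
  rw [add_two_smul_diagonal_mulVec, dotProduct_add, dotProduct_smul, smul_eq_mul]

end Matrix

/-- The midpoint-type update with frozen `U` conserves the quadratic form
`Pᵀ(D + 2 diag U)P + Qᵀ(D + 2 diag U)Q`. -/
theorem midpoint_update_conserves_quadratic_form {N : ℕ}
    (D : Matrix (Fin N) (Fin N) ℝ) (hD : D.transpose = D)
    (τ : ℝ) (hτ : 0 < τ)
    (P0 P1 Q0 Q1 U : Fin N → ℝ)
    (hP : (1/τ) • (P1 - P0) =
      (1/2 : ℝ) • D.mulVec ((1/2 : ℝ) • (Q1 + Q0)) +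
      fun i => U i * ((1/2 : ℝ) • (Q1 + Q0)) i)
    (hQ : (1/τ) • (Q1 - Q0) =
      -((1/2 : ℝ) • D.mulVec ((1/2 : ℝ) • (P1 + P0))) -
      fun i => U i * ((1/2 : ℝ) • (P1 + P0)) i) :
    dotProduct P1 (D.mulVec P1) + dotProduct Q1 (D.mulVec Q1)
      + 2 * dotProduct P1 (fun i => U i * P1 i)
      + 2 * dotProduct Q1 (fun i => U i * Q1 i) =
    dotProduct P0 (D.mulVec P0) + dotProduct Q0 (D.mulVec Q0)
      + 2 * dotProduct P0 (fun i => U i * P0 i)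
      + 2 * dotProduct Q0 (fun i => U i * Q0 i) := by
  set A := D + (2 : ℝ) • diagonal U
  have hA : A.IsSymm := IsSymm.add hD ((isSymm_diagonal U).smul 2)
  have half_step (v : Fin N → ℝ) : (1/2 : ℝ) • D *ᵥ ((1/2 : ℝ) • v) +
      (fun i => U i * ((1/2 : ℝ) • v) i) = (1/4 : ℝ) • A *ᵥ v := by
    ext i
    simp only [A, add_two_smul_diagonal_mulVec, mulVec_smul, Pi.add_apply, Pi.smul_apply,
      smul_eq_mul]
    ring
  have solve_increment {x₀ x₁ y : Fin N → ℝ} (h : (1/τ) • (x₁ - x₀) = y) : x₁ - x₀ = τ • y := by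
    rwa [one_div, inv_smul_eq_iff₀ hτ.ne'] at h
  rw [half_step] at hP
  rw [← neg_add', half_step] at hQ
  have hP' : P1 - P0 = (τ / 4) • A *ᵥ (Q1 + Q0) := by
    rw [solve_increment hP, smul_smul, mul_one_div]
  have hQ' : Q1 - Q0 = -((τ / 4) • A *ᵥ (P1 + P0)) := by
    rw [solve_increment hQ, smul_neg, smul_smul, mul_one_div]
  have conserved := hA.dotProduct_mulVec_self_add_eq_of_midpoint (τ / 4) hP' hQ'
  simp only [A, dotProduct_add_two_smul_diagonal_mulVec] at conserved
  linarith
end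

section
/- Let H : R^d × R^d → R be continuously differentiable and let (y^{m+1}, z^{m+1}) be obtained from (y^m, z^m) by the PAVF method for the canonical Hamiltonian system with J = [[0, I],[-I, 0]]: (y^{m+1}-y^m)/τ = ∫₀¹ H_z(y^{m+1}, εz^{m+1}+(1-ε)z^m) dε and (z^{m+1}-z^m)/τ = -∫₀¹ H_y(εy^{m+1}+(1-ε)y^m, z^m) dε. Then H(y^{m+1}, z^{m+1}) = H(y^m, z^m). -/
/-!
Split the step as `(y⁰, z⁰) → (y¹, z⁰) → (y¹, z¹)`. Along each leg the fundamental theorem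
of calculus writes the change of `H` as the inner product of the averaged partial gradient with
the increment, and the two PAVF equations turn these into `τ⁻¹⟪y¹ - y⁰, z¹ - z⁰⟫` and
`-τ⁻¹⟪z¹ - z⁰, y¹ - y⁰⟫`, which cancel.
-/

open MeasureTheory InnerProductSpace

theorem sub_eq_inner_integral_gradient_segment {E : Type*} [NormedAddCommGroup E]
    [InnerProductSpace ℝ E] [CompleteSpace E] {g : E → ℝ} {G : E → E}
    (hg : ∀ x, HasGradientAt g (G x) x) (hG : Continuous G) (a b : E) :
    g b - g a = ⟪∫ ε in (0:ℝ)..1, G (ε • b + (1 - ε) • a), b - a⟫_ℝ := by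
  set γ : ℝ → E := fun ε => ε • b + (1 - ε) • a with hγ
  have hγ_deriv (ε : ℝ) : HasDerivAt γ (b - a) ε := by
    have := ((hasDerivAt_id ε).smul_const b).fun_add
      (((hasDerivAt_const ε (1:ℝ)).sub (hasDerivAt_id ε)).smul_const a)
    simpa [hγ, sub_eq_add_neg] using this
  have hgγ_deriv (ε : ℝ) : HasDerivAt (g ∘ γ) ⟪G (γ ε), b - a⟫_ℝ ε := by
    simpa [toDual_apply_apply] using (hg (γ ε)).hasFDerivAt.comp_hasDerivAt ε (hγ_deriv ε)
  have hGγ : Continuous (G ∘ γ) := hG.comp (by fun_prop)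
  calc g b - g a = (g ∘ γ) 1 - (g ∘ γ) 0 := by simp [hγ]
    _ = ∫ ε in (0:ℝ)..1, ⟪b - a, G (γ ε)⟫_ℝ := by
      rw [← intervalIntegral.integral_eq_sub_of_hasDerivAt (fun ε _ => hgγ_deriv ε)
        ((continuous_inner.comp (hGγ.prodMk continuous_const)).intervalIntegrable 0 1)]
      simp only [real_inner_comm]
    _ = ⟪∫ ε in (0:ℝ)..1, G (γ ε), b - a⟫_ℝ := by
      rw [real_inner_comm]
      exact (innerSL ℝ (b - a)).intervalIntegral_comp_comm (hGγ.intervalIntegrable 0 1)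

section PartialGradient

variable {E F : Type*} [NormedAddCommGroup E] [InnerProductSpace ℝ E]
  [NormedAddCommGroup F] [InnerProductSpace ℝ F]

theorem continuous_partialGradient_right [CompleteSpace F] {H : E → F → ℝ} {G : E → F → F}
    (hH : ContDiff ℝ 1 fun p : E × F => H p.1 p.2)
    (hG : ∀ y z, HasGradientAt (H y) (G y z) z) :
    Continuous fun p : E × F => G p.1 p.2 := by
  set f : E × F → ℝ := fun p => H p.1 p.2
  have hf : Differentiable ℝ f := hH.differentiable one_ne_zero
  set ι := ContinuousLinearMap.inr ℝ E F
  have hG_eq : (fun p : E × F => G p.1 p.2) =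
      fun p => (toDual ℝ F).symm ((fderiv ℝ f p).comp ι) := by
    funext ⟨y, z⟩
    have hchain : HasFDerivAt (H y) ((fderiv ℝ f (y, z)).comp ι) z :=
      (hf (y, z)).hasFDerivAt.comp z ((hasFDerivAt_const y z).prodMk (hasFDerivAt_id z))
    exact (toDual ℝ F).eq_symm_apply.mpr ((hG y z).hasFDerivAt.unique hchain)
  rw [hG_eq]
  exact (toDual ℝ F).symm.continuous.comp
    (((ContinuousLinearMap.compL ℝ F (E × F) ℝ).flip ι).continuous.comp
      (hH.continuous_fderiv one_ne_zero))

theorem continuous_partialGradient_left [CompleteSpace E] {H : E → F → ℝ} {G : E → F → E}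
    (hH : ContDiff ℝ 1 fun p : E × F => H p.1 p.2)
    (hG : ∀ y z, HasGradientAt (fun y' => H y' z) (G y z) y) :
    Continuous fun p : E × F => G p.1 p.2 :=
  (continuous_partialGradient_right (H := fun z y => H y z) (G := fun z y => G y z)
    (hH.comp (contDiff_snd.prodMk contDiff_fst)) fun z y => hG y z).comp continuous_swap

end PartialGradient

theorem PAVF_preserves_hamiltonian_general {d : ℕ}
    (H : EuclideanSpace ℝ (Fin d) → EuclideanSpace ℝ (Fin d) → ℝ)
    (Hy Hz : EuclideanSpace ℝ (Fin d) → EuclideanSpace ℝ (Fin d) → EuclideanSpace ℝ (Fin d))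
    (hHC1 : ContDiff ℝ 1 (fun p : EuclideanSpace ℝ (Fin d) × EuclideanSpace ℝ (Fin d) =>
      H p.1 p.2))
    (hHy : ∀ y z, HasGradientAt (fun y' => H y' z) (Hy y z) y)
    (hHz : ∀ y z, HasGradientAt (fun z' => H y z') (Hz y z) z)
    (τ : ℝ)
    (y0 y1 z0 z1 : EuclideanSpace ℝ (Fin d))
    (hy : (1/τ) • (y1 - y0) = ∫ ε in (0:ℝ)..1, Hz y1 (ε • z1 + (1 - ε) • z0))
    (hz : (1/τ) • (z1 - z0) = -∫ ε in (0:ℝ)..1, Hy (ε • y1 + (1 - ε) • y0) z0) :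
    H y1 z1 = H y0 z0 := by
  have hHz_cont := continuous_partialGradient_right hHC1 hHz
  have hHy_cont := continuous_partialGradient_left hHC1 hHy
  have hz_leg : H y1 z1 - H y1 z0 = ⟪(1/τ) • (y1 - y0), z1 - z0⟫_ℝ := by
    rw [hy]
    exact sub_eq_inner_integral_gradient_segment (hHz y1)
      (hHz_cont.comp (Continuous.prodMk_right y1)) z0 z1
  have hy_leg : H y1 z0 - H y0 z0 = -⟪(1/τ) • (z1 - z0), y1 - y0⟫_ℝ := by
    rw [hz, inner_neg_left, neg_neg]
    exact sub_eq_inner_integral_gradient_segment (fun y => hHy y z0)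
      (hHy_cont.comp (Continuous.prodMk_left z0)) y0 y1
  rw [real_inner_smul_left, real_inner_comm] at hz_leg
  rw [real_inner_smul_left] at hy_leg
  linarith

/-- Energy preservation of the PAVF method for canonical Hamiltonian systems:
if `(y¹ - y⁰)/τ = ∫₀¹ H_z(y¹, εz¹ + (1-ε)z⁰) dε` and
`(z¹ - z⁰)/τ = -∫₀¹ H_y(εy¹ + (1-ε)y⁰, z⁰) dε`, then `H(y¹, z¹) = H(y⁰, z⁰)`. -/
theorem PAVF_preserves_hamiltonian {d : ℕ}
    (H : EuclideanSpace ℝ (Fin d) → EuclideanSpace ℝ (Fin d) → ℝ)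
    (Hy Hz : EuclideanSpace ℝ (Fin d) → EuclideanSpace ℝ (Fin d) → EuclideanSpace ℝ (Fin d))
    (hHC1 : ContDiff ℝ 1 (fun p : EuclideanSpace ℝ (Fin d) × EuclideanSpace ℝ (Fin d) =>
      H p.1 p.2))
    (hHy : ∀ y z, HasGradientAt (fun y' => H y' z) (Hy y z) y)
    (hHz : ∀ y z, HasGradientAt (fun z' => H y z') (Hz y z) z)
    (τ : ℝ) (hτ : 0 < τ)
    (y0 y1 z0 z1 : EuclideanSpace ℝ (Fin d))
    (hy : (1/τ) • (y1 - y0) = ∫ ε in (0:ℝ)..1, Hz y1 (ε • z1 + (1 - ε) • z0))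
    (hz : (1/τ) • (z1 - z0) = -∫ ε in (0:ℝ)..1, Hy (ε • y1 + (1 - ε) • y0) z0) :
    H y1 z1 = H y0 z0 :=
  PAVF_preserves_hamiltonian_general H Hy Hz hHC1 hHy hHz τ y0 y1 z0 z1 hy hz
end

section
/- Let f be a C¹ vector field on R^n of the form f(w) = S ∇H(w) with S skew-symmetric and H ∈ C². For the AVF update w^{m+1} defined implicitly by (w^{m+1} - w^m)/τ = S ∫₀¹ ∇H(ε w^{m+1} + (1-ε) w^m) dε, we have H(w^{m+1}) = H(w^m). -/
/-! Along the segment `γ(ε) = ε • w₁ + (1 - ε) • w₀` the fundamental theorem of calculus gives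
`H w₁ - H w₀ = ⟪∫₀¹ ∇H(γ ε) dε, w₁ - w₀⟫`. The AVF relation says `w₁ - w₀ = τ S v` for exactly this
averaged gradient `v`, and `⟪v, S v⟫ = 0` because `S` is skew-symmetric. -/

open MeasureTheory InnerProductSpace Matrix

theorem ContDiff.continuous_gradient {𝕜 F : Type*} [RCLike 𝕜] [NormedAddCommGroup F]
    [InnerProductSpace 𝕜 F] [CompleteSpace F] {f : F → 𝕜} (hf : ContDiff 𝕜 1 f) :
    Continuous (gradient f) :=
  (toDual 𝕜 F).symm.continuous.comp (hf.continuous_fderiv one_ne_zero)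

theorem sub_eq_inner_intervalIntegral_of_hasGradientAt {F : Type*} [NormedAddCommGroup F]
    [InnerProductSpace ℝ F] [CompleteSpace F] {f : F → ℝ} {f' : F → F}
    (hf : ∀ x, HasGradientAt f (f' x) x) {x y : F}
    (hint : IntervalIntegrable (fun ε : ℝ => f' (ε • y + (1 - ε) • x)) volume 0 1) :
    f y - f x = ⟪∫ ε in (0 : ℝ)..1, f' (ε • y + (1 - ε) • x), y - x⟫_ℝ := by
  have hsegment (ε : ℝ) : HasDerivAt (fun t : ℝ => t • y + (1 - t) • x) (y - x) ε := by
    simpa [sub_eq_add_neg] using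
      ((hasDerivAt_id' ε).smul_const y).fun_add (((hasDerivAt_id' ε).const_sub 1).smul_const x)
  let L : F →L[ℝ] ℝ := (innerSL ℝ).flip (y - x)
  have hderiv (ε : ℝ) : HasDerivAt (fun t : ℝ => f (t • y + (1 - t) • x))
      (L (f' (ε • y + (1 - ε) • x))) ε :=
    (hf _).hasFDerivAt.comp_hasDerivAt ε (hsegment ε)
  calc f y - f x = ∫ ε in (0 : ℝ)..1, L (f' (ε • y + (1 - ε) • x)) := by
        rw [intervalIntegral.integral_eq_sub_of_hasDerivAt (fun ε _ => hderiv ε)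
          ⟨L.integrable_comp hint.1, L.integrable_comp hint.2⟩]
        simp
    _ = ⟪∫ ε in (0 : ℝ)..1, f' (ε • y + (1 - ε) • x), y - x⟫_ℝ :=
        L.intervalIntegral_comp_comm hint

theorem Matrix.dotProduct_mulVec_self_eq_zero_of_transpose_eq_neg {m R : Type*} [Fintype m]
    [CommRing R] [NoZeroDivisors R] [CharZero R] {S : Matrix m m R} (hS : Sᵀ = -S)
    (v : m → R) : v ⬝ᵥ S *ᵥ v = 0 := by
  refine CharZero.eq_neg_self_iff.mp ?_
  calc v ⬝ᵥ S *ᵥ v = Sᵀ *ᵥ v ⬝ᵥ v := by rw [dotProduct_mulVec, mulVec_transpose]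
    _ = -(v ⬝ᵥ S *ᵥ v) := by rw [hS, neg_mulVec, neg_dotProduct, dotProduct_comm]

theorem PiLp.ofLp_intervalIntegral {p : ENNReal} [Fact (1 ≤ p)] {ι : Type*} [Fintype ι]
    {β : ι → Type*} [∀ i, NormedAddCommGroup (β i)] [∀ i, NormedSpace ℝ (β i)]
    [∀ i, CompleteSpace (β i)] (f : ℝ → PiLp p β) (a b : ℝ) :
    ∫ t in a..b, WithLp.ofLp (f t) = WithLp.ofLp (∫ t in a..b, f t) := by
  simp only [intervalIntegral, WithLp.ofLp_sub]
  congr 1 <;> exact (PiLp.continuousLinearEquiv p ℝ β).integral_comp_comm f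

/-- Energy preservation of the AVF method: for `f(w) = S ∇H(w)` with `S` skew-symmetric
and `H` of class `C²`, the AVF update
`(wᵐ⁺¹ - wᵐ)/τ = S ∫₀¹ ∇H(ε wᵐ⁺¹ + (1-ε) wᵐ) dε` satisfies `H(wᵐ⁺¹) = H(wᵐ)`. -/
theorem AVF_preserves_hamiltonian {n : ℕ}
    (S : Matrix (Fin n) (Fin n) ℝ) (hS : S.transpose = -S)
    (H : EuclideanSpace ℝ (Fin n) → ℝ) (hH : ContDiff ℝ 2 H)
    (gradH : EuclideanSpace ℝ (Fin n) → EuclideanSpace ℝ (Fin n))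
    (hgrad : ∀ w, HasGradientAt H (gradH w) w)
    (τ : ℝ) (hτ : 0 < τ)
    (w0 w1 : EuclideanSpace ℝ (Fin n))
    (hAVF : (1/τ) • (w1 - w0) =
      (WithLp.toLp 2 (S.mulVec (∫ ε in (0:ℝ)..1, gradH (ε • w1 + (1 - ε) • w0)) : Fin n → ℝ) :
        EuclideanSpace ℝ (Fin n))) :
    H w1 = H w0 := by
  set v := ∫ ε in (0 : ℝ)..1, gradH (ε • w1 + (1 - ε) • w0)
  have hcont : Continuous gradH := gradient_eq hgrad ▸ (hH.of_le (by norm_num)).continuous_gradient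
  have hstep : w1 - w0 = τ • WithLp.toLp 2 (S *ᵥ WithLp.ofLp v) := by
    rw [← PiLp.ofLp_intervalIntegral, ← hAVF, smul_smul, mul_one_div_cancel hτ.ne', one_smul]
  have hskew : ⟪v, WithLp.toLp 2 (S *ᵥ WithLp.ofLp v)⟫_ℝ = 0 := by
    simpa [EuclideanSpace.inner_eq_star_dotProduct, dotProduct_comm] using
      dotProduct_mulVec_self_eq_zero_of_transpose_eq_neg hS (WithLp.ofLp v)
  rw [← sub_eq_zero, sub_eq_inner_intervalIntegral_of_hasGradientAt hgrad
    ((hcont.comp (by fun_prop)).intervalIntegrable 0 1), hstep, real_inner_smul_right, hskew,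
    mul_zero]
end
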